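/- For any two lattice polygonal regions A and B in the plane, let D = A \ interior B (the closed region representing the set difference of A and B). Then there exist lattice polygonal regions Q₁ and Q₂ such that Q₁ ⊆ D ⊆ Q₂, every point x of D \ Q₁ satisfies Metric.infDist x (Dᶜ) < Real.sqrt 2, and, provided D is nonempty, every point x of Q₂ satisfies Metric.infDist x D < Real.sqrt 2. -/

import Mathlib

/-- A point of the Euclidean plane is a *lattice point* if both its coordinates
are integers. -/
def IsLatticePoint (p : EuclideanSpace ℝ (Fin 2)) : Prop :=
  (∃ m : ℤ, p 0 = (m : ℝ)) ∧ (∃ k : ℤ, p 1 = (k : ℝ))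

/-- A *lattice polygonal region* is a finite union of closed triangles
(convex hulls of three-point sets) all of whose vertices are lattice points. -/
def IsLatticePolygonalRegion (P : Set (EuclideanSpace ℝ (Fin 2))) : Prop :=
  ∃ T : Finset (EuclideanSpace ℝ (Fin 2) × EuclideanSpace ℝ (Fin 2) × EuclideanSpace ℝ (Fin 2)),
    (∀ t ∈ T, IsLatticePoint t.1 ∧ IsLatticePoint t.2.1 ∧ IsLatticePoint t.2.2) ∧
    P = ⋃ t ∈ T, convexHull ℝ ({t.1, t.2.1, t.2.2} : Set (EuclideanSpace ℝ (Fin 2)))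

open Metric Bornology

abbrev E2 := EuclideanSpace ℝ (Fin 2)

def rpt (a b : ℝ) : E2 := WithLp.toLp 2 ![a, b]

@[simp] lemma rpt_zero (a b : ℝ) : rpt a b 0 = a := rfl
@[simp] lemma rpt_one (a b : ℝ) : rpt a b 1 = b := rfl

def cell (m k : ℤ) : Set E2 :=
  {z | (m:ℝ) ≤ z 0 ∧ z 0 ≤ (m:ℝ)+1 ∧ (k:ℝ) ≤ z 1 ∧ z 1 ≤ (k:ℝ)+1}

lemma convex_cell (m k : ℤ) : Convex ℝ (cell m k) := by
  intro u hu v hv a b ha hb hab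
  obtain ⟨hu0, hu0', hu1, hu1'⟩ := hu
  obtain ⟨hv0, hv0', hv1, hv1'⟩ := hv
  have h0 : (a • u + b • v) 0 = a * u 0 + b * v 0 := rfl
  have h1 : (a • u + b • v) 1 = a * u 1 + b * v 1 := rfl
  have em : a * (m:ℝ) + b * (m:ℝ) = m := by rw [← add_mul, hab, one_mul]
  have em' : a * ((m:ℝ)+1) + b * ((m:ℝ)+1) = (m:ℝ)+1 := by rw [← add_mul, hab, one_mul]
  have ek : a * (k:ℝ) + b * (k:ℝ) = k := by rw [← add_mul, hab, one_mul]
  have ek' : a * ((k:ℝ)+1) + b * ((k:ℝ)+1) = (k:ℝ)+1 := by rw [← add_mul, hab, one_mul]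
  refine ⟨?_, ?_, ?_, ?_⟩
  · rw [h0]; linarith [mul_le_mul_of_nonneg_left hu0 ha, mul_le_mul_of_nonneg_left hv0 hb]
  · rw [h0]; linarith [mul_le_mul_of_nonneg_left hu0' ha, mul_le_mul_of_nonneg_left hv0' hb]
  · rw [h1]; linarith [mul_le_mul_of_nonneg_left hu1 ha, mul_le_mul_of_nonneg_left hv1 hb]
  · rw [h1]; linarith [mul_le_mul_of_nonneg_left hu1' ha, mul_le_mul_of_nonneg_left hv1' hb]

lemma combo_mem_convexHull {a b c : E2} {w1 w2 w3 : ℝ} (h1 : 0 ≤ w1) (h2 : 0 ≤ w2)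
    (h3 : 0 ≤ w3) (hsum : w1 + w2 + w3 = 1) :
    w1 • a + w2 • b + w3 • c ∈ convexHull ℝ ({a, b, c} : Set E2) := by
  have := (convex_convexHull ℝ ({a, b, c} : Set E2)).sum_mem (t := Finset.univ)
    (w := ![w1, w2, w3]) (z := ![a, b, c]) ?_ ?_ ?_
  · simpa [Fin.sum_univ_three, add_assoc] using this
  · intro i _; fin_cases i <;> simpa
  · simp [Fin.sum_univ_three, hsum]
  · intro i _
    fin_cases i <;> apply subset_convexHull <;> simp

lemma corners_in_cell (m k : ℤ) :
    ({rpt m k, rpt (m+1) k, rpt (m+1) (k+1)} : Set E2) ⊆ cell m k ∧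
    ({rpt m k, rpt m (k+1), rpt (m+1) (k+1)} : Set E2) ⊆ cell m k := by
  constructor <;> intro p hp <;>
    rcases hp with h | h | h <;> subst h <;>
    refine ⟨?_, ?_, ?_, ?_⟩ <;> simp <;> push_cast <;> linarith

lemma tri1_subset_cell (m k : ℤ) :
    convexHull ℝ ({rpt m k, rpt (m+1) k, rpt (m+1) (k+1)} : Set E2) ⊆ cell m k :=
  convexHull_min (corners_in_cell m k).1 (convex_cell m k)

lemma tri2_subset_cell (m k : ℤ) :
    convexHull ℝ ({rpt m k, rpt m (k+1), rpt (m+1) (k+1)} : Set E2) ⊆ cell m k :=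
  convexHull_min (corners_in_cell m k).2 (convex_cell m k)

lemma cell_subset_tris (m k : ℤ) :
    cell m k ⊆ convexHull ℝ ({rpt m k, rpt (m+1) k, rpt (m+1) (k+1)} : Set E2) ∪
      convexHull ℝ ({rpt m k, rpt m (k+1), rpt (m+1) (k+1)} : Set E2) := by
  intro z hz
  obtain ⟨h0, h0', h1, h1'⟩ := hz
  set s := z 0 - m with hs
  set t := z 1 - k with ht
  rcases le_total t s with h | h
  · left
    have hz' : z = (1 - s) • rpt m k + (s - t) • rpt (m+1) k + t • rpt (m+1) (k+1) := by
      ext i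
      fin_cases i <;>
        · show z _ = (1 - s) * _ + (s - t) * _ + t * _
          simp [hs, ht]; push_cast; ring
    rw [hz']
    exact combo_mem_convexHull (by linarith) (by linarith) (by linarith) (by ring)
  · right
    have hz' : z = (1 - t) • rpt m k + (t - s) • rpt m (k+1) + s • rpt (m+1) (k+1) := by
      ext i
      fin_cases i <;>
        · show z _ = (1 - t) * _ + (t - s) * _ + s * _
          simp [hs, ht]; push_cast; ring
    rw [hz']
    exact combo_mem_convexHull (by linarith) (by linarith) (by linarith) (by ring)

lemma dist_le_sqrt_two {x y : E2} (h0 : |x 0 - y 0| ≤ 1) (h1 : |x 1 - y 1| ≤ 1) :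
    dist x y ≤ Real.sqrt 2 := by
  rw [EuclideanSpace.dist_eq, Fin.sum_univ_two, Real.dist_eq, Real.dist_eq]
  apply Real.sqrt_le_sqrt
  have a0 := abs_nonneg (x 0 - y 0)
  have a1 := abs_nonneg (x 1 - y 1)
  nlinarith [sq_abs (x 0 - y 0), sq_abs (x 1 - y 1)]

lemma dist_lt_sqrt_two {x y : E2} (h0 : |x 0 - y 0| ≤ 1) (h1 : |x 1 - y 1| ≤ 1)
    (h : |x 0 - y 0| < 1 ∨ |x 1 - y 1| < 1) : dist x y < Real.sqrt 2 := by
  rw [EuclideanSpace.dist_eq, Fin.sum_univ_two, Real.dist_eq, Real.dist_eq]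
  have a0 := abs_nonneg (x 0 - y 0)
  have a1 := abs_nonneg (x 1 - y 1)
  apply Real.sqrt_lt_sqrt (by positivity)
  rcases h with h | h <;> nlinarith [sq_abs (x 0 - y 0), sq_abs (x 1 - y 1)]

lemma abs_coord_le_norm (z : E2) (i : Fin 2) : |z i| ≤ ‖z‖ := by
  rw [EuclideanSpace.norm_eq, ← Real.sqrt_sq_eq_abs]
  apply Real.sqrt_le_sqrt
  have : z i ^ 2 ≤ ∑ j : Fin 2, ‖z j‖ ^ 2 := by
    have := Finset.single_le_sum (f := fun j => ‖z j‖ ^ 2)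
      (fun j _ => by positivity) (Finset.mem_univ i)
    simpa [Real.norm_eq_abs, sq_abs] using this
  exact this

lemma infDist_lt_of_isOpen {U : Set E2} (hU : IsOpen U) {x y : E2} (hy : y ∈ U)
    (hxy : x ≠ y) : Metric.infDist x U < dist x y := by
  obtain ⟨ε, hε, hball⟩ := Metric.isOpen_iff.1 hU y hy
  set d := dist x y with hd
  have hdpos : 0 < d := dist_pos.2 hxy
  set τ := min (ε / (2 * d)) (1/2) with hτ
  have hτpos : 0 < τ := lt_min (by positivity) (by norm_num)
  have hτlt : τ < 1 := lt_of_le_of_lt (min_le_right _ _) (by norm_num)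
  set y' := y + τ • (x - y) with hy'
  have h1 : dist y' y = τ * d := by
    rw [dist_eq_norm, hy', add_sub_cancel_left, norm_smul, Real.norm_eq_abs,
      abs_of_pos hτpos, ← dist_eq_norm]
  have h2 : τ * d < ε := by
    have : τ ≤ ε / (2 * d) := min_le_left _ _
    have := mul_le_mul_of_nonneg_right this hdpos.le
    have hε2 : ε / (2 * d) * d = ε / 2 := by field_simp
    calc τ * d ≤ ε / (2 * d) * d := by assumption
      _ = ε / 2 := hε2
      _ < ε := by linarith
  have hy'U : y' ∈ U := hball (by rw [mem_ball, h1]; exact h2)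
  have h3 : dist x y' = (1 - τ) * d := by
    have hxy' : x - y' = (1 - τ) • (x - y) := by rw [hy']; module
    rw [dist_eq_norm, hxy', norm_smul, Real.norm_eq_abs, abs_of_pos (by linarith),
      ← dist_eq_norm]
  calc Metric.infDist x U ≤ dist x y' := Metric.infDist_le_dist_of_mem hy'U
    _ = (1 - τ) * d := h3
    _ < d := by nlinarith

lemma isLatticePoint_rpt (m k : ℤ) : IsLatticePoint (rpt m k) := ⟨⟨m, rfl⟩, ⟨k, rfl⟩⟩

lemma isLatticePoint_rpt' (m k : ℤ) : IsLatticePoint (rpt (m+1) k) :=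
  ⟨⟨m+1, by push_cast; simp⟩, ⟨k, rfl⟩⟩

lemma isLatticePoint_rpt'' (m k : ℤ) : IsLatticePoint (rpt (m+1) (k+1)) :=
  ⟨⟨m+1, by push_cast; simp⟩, ⟨k+1, by push_cast; simp⟩⟩

lemma isLatticePoint_rpt''' (m k : ℤ) : IsLatticePoint (rpt m (k+1)) :=
  ⟨⟨m, rfl⟩, ⟨k+1, by push_cast; simp⟩⟩


/-- Section 7, set difference: the region `D = A \ interior B` admits inner
and outer lattice polygonal roundings `Q₁ ⊆ D ⊆ Q₂`, each within distance
`√2` of `D`. -/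
theorem inner_outer_rounding_of_set_difference
    (A B : Set (EuclideanSpace ℝ (Fin 2)))
    (hA : IsLatticePolygonalRegion A) (hB : IsLatticePolygonalRegion B) :
    ∃ Q₁ Q₂ : Set (EuclideanSpace ℝ (Fin 2)),
      IsLatticePolygonalRegion Q₁ ∧ IsLatticePolygonalRegion Q₂ ∧
      Q₁ ⊆ A \ interior B ∧ A \ interior B ⊆ Q₂ ∧
      (∀ x ∈ (A \ interior B) \ Q₁,
        Metric.infDist x ((A \ interior B)ᶜ) < Real.sqrt 2) ∧
      ((A \ interior B).Nonempty →
        ∀ x ∈ Q₂, Metric.infDist x (A \ interior B) < Real.sqrt 2) := by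
  classical
  obtain ⟨TA, hTA, hAeq⟩ := hA
  set D : Set E2 := A \ interior B with hDdef
  -- A is compact
  have hAcomp : IsCompact A := by
    rw [hAeq]
    exact (TA.finite_toSet).isCompact_biUnion
      (fun t _ => (Set.toFinite _).isCompact_convexHull ℝ)
  have hDclosed : IsClosed D := hAcomp.isClosed.sdiff isOpen_interior
  have hUopen : IsOpen Dᶜ := hDclosed.isOpen_compl
  -- bound
  obtain ⟨R₀, hR₀⟩ := hAcomp.isBounded.subset_closedBall 0
  set R := max R₀ 0 with hR
  have hAR : A ⊆ Metric.closedBall 0 R :=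
    hR₀.trans (Metric.closedBall_subset_closedBall (le_max_left _ _))
  have hRnn : (0:ℝ) ≤ R := le_max_right _ _
  set N : ℤ := ⌈R⌉ + 1 with hN
  have hNR : (N:ℝ) = (⌈R⌉:ℝ) + 1 := by rw [hN]; push_cast; ring
  have hRN : R ≤ (N:ℝ) := by
    have := Int.le_ceil R
    linarith
  have hcoord : ∀ z ∈ D, ∀ i : Fin 2, |z i| ≤ R := by
    intro z hz i
    have hzA : z ∈ A := hz.1
    have : ‖z‖ ≤ R := by
      have := hAR hzA
      rwa [Metric.mem_closedBall, dist_zero_right] at this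
    exact (abs_coord_le_norm z i).trans this
  have hfloor : ∀ z ∈ D, ∀ i : Fin 2, ⌊z i⌋ ∈ Finset.Icc (-N) N := by
    intro z hz i
    have h := hcoord z hz i
    rw [abs_le] at h
    rw [Finset.mem_Icc]
    constructor
    · have h1 : (-N : ℝ) ≤ ⌊z i⌋ := by
        have := Int.sub_one_lt_floor (z i)
        push_cast
        have := Int.le_ceil R
        push_cast at this ⊢
        linarith [Int.sub_one_lt_floor (z i)]
      exact_mod_cast h1
    · have h2 : (⌊z i⌋ : ℝ) ≤ N := by
        have := Int.floor_le (z i)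
        linarith
      exact_mod_cast h2
  have hmemcell : ∀ z : E2, z ∈ cell ⌊z 0⌋ ⌊z 1⌋ :=
    fun z => ⟨Int.floor_le _, (Int.lt_floor_add_one _).le, Int.floor_le _,
      (Int.lt_floor_add_one _).le⟩
  -- same-cell distance bound
  have hsame : ∀ (m k : ℤ) (x y : E2), x ∈ cell m k → y ∈ cell m k →
      (∀ i : Fin 2, |x i - y i| ≤ 1) := by
    intro m k x y hx hy i
    obtain ⟨a1, a2, a3, a4⟩ := hx
    obtain ⟨b1, b2, b3, b4⟩ := hy
    fin_cases i <;> rw [abs_le] <;> constructor <;> simp <;> linarith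
  set box : Finset (ℤ × ℤ) := Finset.Icc (-N) N ×ˢ Finset.Icc (-N) N with hbox
  set f1 : ℤ × ℤ → E2 × E2 × E2 :=
    fun c => (rpt c.1 c.2, rpt (c.1+1) c.2, rpt (c.1+1) (c.2+1)) with hf1
  set f2 : ℤ × ℤ → E2 × E2 × E2 :=
    fun c => (rpt c.1 c.2, rpt c.1 (c.2+1), rpt (c.1+1) (c.2+1)) with hf2
  set f3 : ℤ × ℤ → E2 × E2 × E2 :=
    fun c => (rpt c.1 c.2, rpt c.1 c.2, rpt c.1 c.2) with hf3
  set T1 : Finset (ℤ × ℤ) := box.filter (fun c => cell c.1 c.2 ⊆ D) with hT1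
  set T2 : Finset (ℤ × ℤ) :=
    box.filter (fun c => ∃ z, z ∈ D ∧ z ∈ cell c.1 c.2 ∧ ¬ IsLatticePoint z) with hT2
  set P2 : Finset (ℤ × ℤ) := box.filter (fun c => rpt c.1 c.2 ∈ D) with hP2
  set TT1 : Finset (E2 × E2 × E2) := T1.image f1 ∪ T1.image f2 with hTT1
  set TT2 : Finset (E2 × E2 × E2) := T2.image f1 ∪ T2.image f2 ∪ P2.image f3 with hTT2
  set Q1 : Set E2 := ⋃ t ∈ TT1, convexHull ℝ ({t.1, t.2.1, t.2.2} : Set E2) with hQ1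
  set Q2 : Set E2 := ⋃ t ∈ TT2, convexHull ℝ ({t.1, t.2.1, t.2.2} : Set E2) with hQ2
  -- lattice property of vertices
  have hlat : ∀ (c : ℤ × ℤ) (g : ℤ × ℤ → E2 × E2 × E2),
      (g = f1 ∨ g = f2 ∨ g = f3) →
      IsLatticePoint (g c).1 ∧ IsLatticePoint (g c).2.1 ∧ IsLatticePoint (g c).2.2 := by
    rintro c g (rfl | rfl | rfl)
    · exact ⟨isLatticePoint_rpt _ _, isLatticePoint_rpt' _ _, isLatticePoint_rpt'' _ _⟩
    · exact ⟨isLatticePoint_rpt _ _, isLatticePoint_rpt''' _ _, isLatticePoint_rpt'' _ _⟩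
    · exact ⟨isLatticePoint_rpt _ _, isLatticePoint_rpt _ _, isLatticePoint_rpt _ _⟩
  refine ⟨Q1, Q2, ⟨TT1, ?_, rfl⟩, ⟨TT2, ?_, rfl⟩, ?_, ?_, ?_, ?_⟩
  · intro t ht
    rw [hTT1, Finset.mem_union] at ht
    rcases ht with ht | ht <;> obtain ⟨c, _, rfl⟩ := Finset.mem_image.1 ht
    · exact hlat c f1 (Or.inl rfl)
    · exact hlat c f2 (Or.inr (Or.inl rfl))
  · intro t ht
    rw [hTT2, Finset.mem_union, Finset.mem_union] at ht
    rcases ht with (ht | ht) | ht <;> obtain ⟨c, _, rfl⟩ := Finset.mem_image.1 ht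
    · exact hlat c f1 (Or.inl rfl)
    · exact hlat c f2 (Or.inr (Or.inl rfl))
    · exact hlat c f3 (Or.inr (Or.inr rfl))
  -- Q1 ⊆ D
  · intro x hx
    rw [hQ1, Set.mem_iUnion₂] at hx
    obtain ⟨t, ht, hxt⟩ := hx
    rw [hTT1, Finset.mem_union] at ht
    rcases ht with ht | ht <;> obtain ⟨c, hc, rfl⟩ := Finset.mem_image.1 ht <;>
      rw [hT1, Finset.mem_filter] at hc
    · exact hc.2 (tri1_subset_cell c.1 c.2 hxt)
    · exact hc.2 (tri2_subset_cell c.1 c.2 hxt)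
  -- D ⊆ Q2
  · intro z hz
    by_cases hl : IsLatticePoint z
    · obtain ⟨⟨m, hm⟩, ⟨k, hk⟩⟩ := hl
      have hzpt : z = rpt m k := by
        ext i
        fin_cases i
        · exact hm
        · exact hk
      have hmk : (m, k) ∈ P2 := by
        rw [hP2, Finset.mem_filter]
        refine ⟨?_, by rw [← hzpt]; exact hz⟩
        rw [hbox, Finset.mem_product]
        constructor <;> rw [Finset.mem_Icc] <;> constructor <;>
          [ (have := hcoord z hz 0; rw [hm, abs_le] at this;
             exact_mod_cast le_trans (by linarith [hRN] : (-N:ℝ) ≤ (m:ℝ)) le_rfl);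
            (have := hcoord z hz 0; rw [hm, abs_le] at this;
             exact_mod_cast le_trans le_rfl (by linarith [hRN] : (m:ℝ) ≤ (N:ℝ)));
            (have := hcoord z hz 1; rw [hk, abs_le] at this;
             exact_mod_cast le_trans (by linarith [hRN] : (-N:ℝ) ≤ (k:ℝ)) le_rfl);
            (have := hcoord z hz 1; rw [hk, abs_le] at this;
             exact_mod_cast le_trans le_rfl (by linarith [hRN] : (k:ℝ) ≤ (N:ℝ)))]
      rw [hQ2, Set.mem_iUnion₂]
      refine ⟨f3 (m, k), ?_, ?_⟩
      · rw [hTT2, Finset.mem_union]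
        exact Or.inr (Finset.mem_image.2 ⟨(m, k), hmk, rfl⟩)
      · rw [hf3, hzpt]
        exact subset_convexHull ℝ _ (by simp)
    · set c : ℤ × ℤ := (⌊z 0⌋, ⌊z 1⌋) with hc
      have hcT2 : c ∈ T2 := by
        rw [hT2, Finset.mem_filter]
        refine ⟨?_, z, hz, hmemcell z, hl⟩
        rw [hbox, Finset.mem_product]
        exact ⟨hfloor z hz 0, hfloor z hz 1⟩
      have := cell_subset_tris c.1 c.2 (hmemcell z)
      rw [hQ2, Set.mem_iUnion₂]
      rcases this with h | h
      · refine ⟨f1 c, ?_, h⟩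
        rw [hTT2, Finset.mem_union, Finset.mem_union]
        exact Or.inl (Or.inl (Finset.mem_image.2 ⟨c, hcT2, rfl⟩))
      · refine ⟨f2 c, ?_, h⟩
        rw [hTT2, Finset.mem_union, Finset.mem_union]
        exact Or.inl (Or.inr (Finset.mem_image.2 ⟨c, hcT2, rfl⟩))
  -- inner distance condition
  · rintro x ⟨hxD, hxQ⟩
    by_contra hcon
    push_neg at hcon
    have hcell : cell ⌊x 0⌋ ⌊x 1⌋ ⊆ D := by
      intro y hy
      by_contra hyD
      have hxy : x ≠ y := fun he => hyD (he ▸ hxD)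
      have hlt := infDist_lt_of_isOpen hUopen (Set.mem_compl hyD) hxy
      have hle : dist x y ≤ Real.sqrt 2 :=
        dist_le_sqrt_two (hsame _ _ x y (hmemcell x) hy 0) (hsame _ _ x y (hmemcell x) hy 1)
      linarith
    have hcT1 : (⌊x 0⌋, ⌊x 1⌋) ∈ T1 := by
      rw [hT1, Finset.mem_filter]
      refine ⟨?_, hcell⟩
      rw [hbox, Finset.mem_product]
      exact ⟨hfloor x hxD 0, hfloor x hxD 1⟩
    apply hxQ
    have := cell_subset_tris ⌊x 0⌋ ⌊x 1⌋ (hmemcell x)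
    rw [hQ1, Set.mem_iUnion₂]
    rcases this with h | h
    · refine ⟨f1 (⌊x 0⌋, ⌊x 1⌋), ?_, h⟩
      rw [hTT1, Finset.mem_union]
      exact Or.inl (Finset.mem_image.2 ⟨_, hcT1, rfl⟩)
    · refine ⟨f2 (⌊x 0⌋, ⌊x 1⌋), ?_, h⟩
      rw [hTT1, Finset.mem_union]
      exact Or.inr (Finset.mem_image.2 ⟨_, hcT1, rfl⟩)
  -- outer distance condition
  · intro _ x hx
    rw [hQ2, Set.mem_iUnion₂] at hx
    obtain ⟨t, ht, hxt⟩ := hx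
    rw [hTT2, Finset.mem_union, Finset.mem_union] at ht
    have key : ∀ (c : ℤ × ℤ), c ∈ T2 → x ∈ cell c.1 c.2 →
        Metric.infDist x D < Real.sqrt 2 := by
      intro c hcT2 hxc
      rw [hT2, Finset.mem_filter] at hcT2
      obtain ⟨-, z, hzD, hzc, hznl⟩ := hcT2
      have hd : dist x z < Real.sqrt 2 := by
        apply dist_lt_sqrt_two (hsame _ _ x z hxc hzc 0) (hsame _ _ x z hxc hzc 1)
        rw [IsLatticePoint, not_and_or] at hznl
        obtain ⟨a1, a2, a3, a4⟩ := hzc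
        obtain ⟨b1, b2, b3, b4⟩ := hxc
        rcases hznl with h | h
        · left
          push_neg at h
          have hne1 : z 0 ≠ (c.1 : ℝ) := h c.1
          have hne2 : z 0 ≠ ((c.1 : ℝ) + 1) := by
            intro he
            exact h (c.1 + 1) (by rw [he]; push_cast; ring)
          rw [abs_lt]
          have h1 : (c.1:ℝ) < z 0 := lt_of_le_of_ne a1 (Ne.symm hne1)
          have h2 : z 0 < (c.1:ℝ) + 1 := lt_of_le_of_ne a2 hne2
          constructor <;> linarith
        · right
          push_neg at h
          have hne1 : z 1 ≠ (c.2 : ℝ) := h c.2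
          have hne2 : z 1 ≠ ((c.2 : ℝ) + 1) := by
            intro he
            exact h (c.2 + 1) (by rw [he]; push_cast; ring)
          rw [abs_lt]
          have h1 : (c.2:ℝ) < z 1 := lt_of_le_of_ne a3 (Ne.symm hne1)
          have h2 : z 1 < (c.2:ℝ) + 1 := lt_of_le_of_ne a4 hne2
          constructor <;> linarith
      exact lt_of_le_of_lt (Metric.infDist_le_dist_of_mem hzD) hd
    rcases ht with (ht | ht) | ht
    · obtain ⟨c, hc, rfl⟩ := Finset.mem_image.1 ht
      exact key c hc (tri1_subset_cell c.1 c.2 hxt)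
    · obtain ⟨c, hc, rfl⟩ := Finset.mem_image.1 ht
      exact key c hc (tri2_subset_cell c.1 c.2 hxt)
    · obtain ⟨c, hc, rfl⟩ := Finset.mem_image.1 ht
      rw [hP2, Finset.mem_filter] at hc
      have hxp : x = rpt c.1 c.2 := by
        have : ({(f3 c).1, (f3 c).2.1, (f3 c).2.2} : Set E2) = {rpt c.1 c.2} := by
          rw [hf3]; simp
        rw [this, convexHull_singleton] at hxt
        exact hxt
      rw [hxp]
      rw [Metric.infDist_zero_of_mem hc.2]
      positivity
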